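/- (Equality of the two forms of the Replica Symmetric trial function.) Let β > 0, let J be a real random variable with symmetric distribution and E|J| < ∞, and let W, W' be i.i.d. random variables with values in [−1,1], with the pair (W,W') independent of J. Define J̃ := (1/β)·artanh(tanh(βJ)·W) and Ĵ := (1/β)·artanh(tanh(βJ)·W·W'), and set q̃_{2n} := E[W^{2n}]. Then E[log cosh(βJ)] − 2·E[log cosh(βJ̃)] + E[log cosh(βĴ)] = ∑_{n=1}^∞ (1/(2n))·E[tanh^{2n}(βJ)]·(1 − q̃_{2n})², with all expectations and the series finite. -/

import Mathlib

/-! With `t = tanh (βJ)`, the identity `artanh (tanh x) = x` writes all three expectations as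
`E[f(t S)]` for `S = 1, W, W W'`, where `f y = log cosh (artanh y) = -½ log (1 - y²)
= ∑_{n ≥ 1} y^{2n} / (2n)` on `(-1, 1)`. The series has nonnegative terms and sum dominated by
`log cosh (βJ) ≤ β|J|`, so it may be integrated termwise; independence factors
`E[(t S)^{2n}] = E[t^{2n}] E[S^{2n}]`, and `E[(W W')^{2n}] = q̃_{2n}²` since `W, W'` are i.i.d.
The coefficient of `E[t^{2n}] / (2n)` is then `1 - 2 q̃_{2n} + q̃_{2n}² = (1 - q̃_{2n})²`. -/

open MeasureTheory ProbabilityTheory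

/-- The inverse hyperbolic tangent on `(−1,1)`: `artanh x = (1/2)·log((1+x)/(1−x))`. -/
noncomputable def artanh (x : ℝ) : ℝ := Real.log ((1 + x) / (1 - x)) / 2

open Real hiding artanh

theorem Real.continuous_tanh : Continuous tanh := by
  rw [show tanh = fun x => sinh x / cosh x from funext tanh_eq_sinh_div_cosh]
  exact continuous_sinh.div continuous_cosh fun x => (cosh_pos x).ne'

theorem log_cosh_le_abs (x : ℝ) : log (cosh x) ≤ |x| := by
  rw [log_le_iff_le_exp (cosh_pos x), cosh_eq]
  have h₁ : exp x ≤ exp |x| := exp_le_exp.mpr (le_abs_self x)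
  have h₂ : exp (-x) ≤ exp |x| := exp_le_exp.mpr (neg_le_abs x)
  linarith

theorem MeasureTheory.Integrable.log_cosh {Ω : Type*} [MeasurableSpace Ω] {μ : Measure Ω}
    {X : Ω → ℝ} (hX : Integrable X μ) : Integrable (fun ω => log (cosh (X ω))) μ := by
  refine hX.abs.mono' ?_ (ae_of_all _ fun ω => ?_)
  · exact (continuous_cosh.log fun x => (cosh_pos x).ne').comp_aestronglyMeasurable hX.1
  · rw [norm_of_nonneg (log_nonneg (one_le_cosh _))]
    exact log_cosh_le_abs _

theorem artanh_eq_real_artanh {x : ℝ} (hx : x ∈ Set.Icc (-1) 1) : artanh x = Real.artanh x := by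
  rw [Real.artanh_eq_half_log hx, artanh]
  ring

theorem artanh_tanh (x : ℝ) : artanh (tanh x) = x := by
  rw [artanh_eq_real_artanh (Set.mem_Icc_of_Ioo (abs_lt.mp (abs_tanh_lt_one x))),
    Real.artanh_tanh]

theorem measurable_log_cosh_artanh : Measurable fun y => log (cosh (artanh y)) := by
  unfold artanh
  fun_prop

theorem log_cosh_artanh {y : ℝ} (hy : |y| < 1) : log (cosh (artanh y)) = -log (1 - y ^ 2) / 2 := by
  have hy2 : 0 ≤ 1 - y ^ 2 := by linarith [(sq_lt_one_iff_abs_lt_one y).mpr hy]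
  rw [artanh_eq_real_artanh (Set.mem_Icc_of_Ioo (abs_lt.mp hy)), cosh_artanh (abs_lt.mp hy),
    one_div, log_inv, log_sqrt hy2]
  ring

theorem log_cosh_artanh_le {x y : ℝ} (hxy : |x| ≤ |y|) (hy : |y| < 1) :
    log (cosh (artanh x)) ≤ log (cosh (artanh y)) := by
  rw [log_cosh_artanh (hxy.trans_lt hy), log_cosh_artanh hy]
  have hy2 : 0 < 1 - y ^ 2 := by linarith [(sq_lt_one_iff_abs_lt_one y).mpr hy]
  have hxy2 : x ^ 2 ≤ y ^ 2 := sq_le_sq.mpr hxy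
  gcongr

theorem hasSum_log_cosh_artanh {y : ℝ} (hy : |y| < 1) :
    HasSum (fun n : ℕ => y ^ (2 * (n + 1)) / (2 * (n + 1))) (log (cosh (artanh y))) := by
  have hy2 : |y ^ 2| < 1 := by rwa [abs_pow, sq_lt_one_iff_abs_lt_one, abs_abs]
  rw [log_cosh_artanh hy]
  refine ((hasSum_pow_div_log_of_abs_lt_one hy2).div_const 2).congr_fun fun n => ?_
  rw [pow_mul]
  field_simp

section

variable {Ω : Type*} [MeasurableSpace Ω] {μ : Measure Ω}

theorem hasSum_integral_log_cosh_artanh {Y : Ω → ℝ} (hY : AEStronglyMeasurable Y μ)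
    (hY1 : ∀ ω, |Y ω| < 1) (hint : Integrable (fun ω => log (cosh (artanh (Y ω)))) μ) :
    HasSum (fun n : ℕ => (∫ ω, Y ω ^ (2 * (n + 1)) ∂μ) / (2 * (n + 1)))
      (∫ ω, log (cosh (artanh (Y ω))) ∂μ) := by
  have hsum := fun ω => hasSum_log_cosh_artanh (hY1 ω)
  have hterm_nonneg (n : ℕ) (ω : Ω) : 0 ≤ Y ω ^ (2 * (n + 1)) / (2 * (n + 1)) :=
    div_nonneg ((even_two_mul _).pow_nonneg _) (by positivity)
  simp_rw [← integral_div]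
  -- nonnegative terms are their own dominating series
  refine hasSum_integral_of_dominated_convergence (fun n ω => Y ω ^ (2 * (n + 1)) / (2 * (n + 1)))
    (fun n => ((hY.aemeasurable.pow_const _).div_const _).aestronglyMeasurable)
    (fun n => ae_of_all _ fun ω => (norm_of_nonneg (hterm_nonneg n ω)).le)
    (ae_of_all _ fun ω => (hsum ω).summable) ?_ (ae_of_all _ hsum)
  simpa only [(hsum _).tsum_eq] using hint

theorem integrable_log_cosh_artanh_mul {t s : Ω → ℝ} (ht : AEStronglyMeasurable t μ)
    (hs : AEStronglyMeasurable s μ) (ht1 : ∀ ω, |t ω| < 1) (hs1 : ∀ ω, |s ω| ≤ 1)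
    (hint : Integrable (fun ω => log (cosh (artanh (t ω)))) μ) :
    Integrable (fun ω => log (cosh (artanh (t ω * s ω)))) μ := by
  refine hint.mono (measurable_log_cosh_artanh.comp_aemeasurable
    (ht.aemeasurable.mul hs.aemeasurable)).aestronglyMeasurable (ae_of_all _ fun ω => ?_)
  have hts : |t ω * s ω| ≤ |t ω| := by
    rw [abs_mul]
    exact mul_le_of_le_one_right (abs_nonneg _) (hs1 ω)
  rw [norm_of_nonneg (log_nonneg (one_le_cosh _)), norm_of_nonneg (log_nonneg (one_le_cosh _))]
  exact log_cosh_artanh_le hts (ht1 ω)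

theorem ProbabilityTheory.IndepFun.integral_mul_pow {t s : Ω → ℝ} (h : IndepFun t s μ)
    (ht : AEStronglyMeasurable t μ) (hs : AEStronglyMeasurable s μ) (k : ℕ) :
    ∫ ω, (t ω * s ω) ^ k ∂μ = (∫ ω, t ω ^ k ∂μ) * ∫ ω, s ω ^ k ∂μ := by
  simp_rw [mul_pow]
  exact (h.comp (measurable_id.pow_const k) (measurable_id.pow_const k))
    |>.integral_fun_mul_eq_mul_integral (ht.pow k) (hs.pow k)

theorem ProbabilityTheory.IndepFun.integral_mul_pow_of_identDistrib {W W' : Ω → ℝ}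
    (h : IndepFun W W' μ) (hid : IdentDistrib W W' μ μ) (k : ℕ) :
    ∫ ω, (W ω * W' ω) ^ k ∂μ = (∫ ω, W ω ^ k ∂μ) ^ 2 := by
  rw [h.integral_mul_pow hid.aemeasurable_fst.aestronglyMeasurable
    hid.aemeasurable_snd.aestronglyMeasurable, sq]
  exact congrArg _ (hid.comp (measurable_id.pow_const k)).integral_eq.symm

theorem hasSum_integral_log_cosh_artanh_mul {t s : Ω → ℝ} (hts : IndepFun t s μ)
    (ht : AEStronglyMeasurable t μ) (hs : AEStronglyMeasurable s μ) (ht1 : ∀ ω, |t ω| < 1)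
    (hs1 : ∀ ω, |s ω| ≤ 1) (hint : Integrable (fun ω => log (cosh (artanh (t ω)))) μ) :
    Integrable (fun ω => log (cosh (artanh (t ω * s ω)))) μ ∧
    HasSum (fun n : ℕ => (∫ ω, t ω ^ (2 * (n + 1)) ∂μ) * (∫ ω, s ω ^ (2 * (n + 1)) ∂μ) /
      (2 * (n + 1))) (∫ ω, log (cosh (artanh (t ω * s ω))) ∂μ) := by
  have hI := integrable_log_cosh_artanh_mul ht hs ht1 hs1 hint
  refine ⟨hI, ?_⟩
  simp_rw [← hts.integral_mul_pow ht hs]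
  refine hasSum_integral_log_cosh_artanh (ht.mul hs) (fun ω => ?_) hI
  rw [abs_mul]
  exact mul_lt_one_of_nonneg_of_lt_one_left (abs_nonneg _) (ht1 ω) (hs1 ω)

end

theorem rs_trial_function_eq_general (β : ℝ) (hβ : 0 < β)
    (Ω : Type) [MeasureSpace Ω] [IsProbabilityMeasure (ℙ : Measure Ω)]
    (J W W' : Ω → ℝ)
    (hJint : Integrable J ℙ)
    (hW : ∀ ω, W ω ∈ Set.Icc (-1 : ℝ) 1) (hW' : ∀ ω, W' ω ∈ Set.Icc (-1 : ℝ) 1)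
    (hWid : IdentDistrib W W' ℙ ℙ) (hWindep : IndepFun W W' ℙ)
    (hindep : IndepFun (fun ω => (W ω, W' ω)) J ℙ) :
    Integrable (fun ω => Real.log (Real.cosh (β * J ω))) ℙ ∧
    Integrable (fun ω =>
      Real.log (Real.cosh (β * ((1 / β) * artanh (Real.tanh (β * J ω) * W ω))))) ℙ ∧
    Integrable (fun ω =>
      Real.log (Real.cosh (β * ((1 / β) * artanh (Real.tanh (β * J ω) * W ω * W' ω))))) ℙ ∧
    Summable (fun n : ℕ => (1 / (2 * (n + 1) : ℝ)) *
      (∫ ω, Real.tanh (β * J ω) ^ (2 * (n + 1)) ∂ℙ) *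
      (1 - ∫ ω, (W ω) ^ (2 * (n + 1)) ∂ℙ) ^ 2) ∧
    (∫ ω, Real.log (Real.cosh (β * J ω)) ∂ℙ)
        - 2 * ∫ ω, Real.log (Real.cosh (β * ((1 / β) * artanh (Real.tanh (β * J ω) * W ω)))) ∂ℙ
        + ∫ ω, Real.log (Real.cosh (β * ((1 / β) * artanh (Real.tanh (β * J ω) * W ω * W' ω)))) ∂ℙ
      = ∑' n : ℕ, (1 / (2 * (n + 1) : ℝ)) *
          (∫ ω, Real.tanh (β * J ω) ^ (2 * (n + 1)) ∂ℙ) *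
          (1 - ∫ ω, (W ω) ^ (2 * (n + 1)) ∂ℙ) ^ 2 := by
  have hψ : Measurable fun x => tanh (β * x) :=
    (continuous_tanh.comp (continuous_const_mul β)).measurable
  set t := fun ω => tanh (β * J ω)
  have ht : AEStronglyMeasurable t ℙ :=
    (hψ.comp_aemeasurable hJint.1.aemeasurable).aestronglyMeasurable
  have ht1 (ω : Ω) : |t ω| < 1 := abs_tanh_lt_one _
  have hWm : AEStronglyMeasurable W ℙ := hWid.aemeasurable_fst.aestronglyMeasurable
  have hW'm : AEStronglyMeasurable W' ℙ := hWid.aemeasurable_snd.aestronglyMeasurable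
  have hW1 (ω : Ω) : |W ω| ≤ 1 := abs_le.mpr (hW ω)
  have hWW'1 (ω : Ω) : |W ω * W' ω| ≤ 1 := by
    rw [abs_mul]
    exact mul_le_one₀ (hW1 ω) (abs_nonneg _) (abs_le.mpr (hW' ω))
  have htW : IndepFun t W ℙ := (hindep.comp measurable_fst hψ).symm
  have htWW' : IndepFun t (fun ω => W ω * W' ω) ℙ :=
    (hindep.comp (measurable_fst.mul measurable_snd) hψ).symm
  have hlog_cosh (ω : Ω) : log (cosh (β * J ω)) = log (cosh (artanh (t ω))) := by
    rw [_root_.artanh_tanh]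
  have hint : Integrable (fun ω => log (cosh (artanh (t ω)))) ℙ := by
    simpa only [hlog_cosh] using (hJint.const_mul β).log_cosh
  have hS₁ := hasSum_integral_log_cosh_artanh ht ht1 hint
  obtain ⟨hI₂, hS₂⟩ := hasSum_integral_log_cosh_artanh_mul htW ht hWm ht1 hW1 hint
  obtain ⟨hI₃, hS₃⟩ := hasSum_integral_log_cosh_artanh_mul htWW' ht (hWm.mul hW'm) ht1 hWW'1 hint
  simp only [hWindep.integral_mul_pow_of_identDistrib hWid, ← mul_assoc] at hI₃ hS₃
  have hβ_cancel (y : ℝ) : β * (1 / β * y) = y := by field_simp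
  simp only [hβ_cancel, hlog_cosh]
  have H := (hS₁.sub (hS₂.mul_left 2)).add hS₃
  exact ⟨hint, hI₂, hI₃, (H.congr_fun fun n => by ring).summable,
    (H.congr_fun fun n => by ring).tsum_eq.symm⟩

/-- Equality of the two forms of the Replica Symmetric trial function:
with `J` symmetric integrable, `W, W'` i.i.d. with values in `[−1,1]`, `(W,W')`
independent of `J`, `J̃ := (1/β)·artanh(tanh(βJ)·W)`,
`Ĵ := (1/β)·artanh(tanh(βJ)·W·W')` and `q̃_{2n} := E[W^{2n}]`, one has
`E[log cosh(βJ)] − 2·E[log cosh(βJ̃)] + E[log cosh(βĴ)]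
  = ∑_{n≥1} (1/(2n))·E[tanh^{2n}(βJ)]·(1 − q̃_{2n})²`,
with all expectations and the series finite. -/
theorem rs_trial_function_eq (β : ℝ) (hβ : 0 < β)
    (Ω : Type) [MeasureSpace Ω] [IsProbabilityMeasure (ℙ : Measure Ω)]
    (J W W' : Ω → ℝ) (hJmeas : Measurable J) (hWmeas : Measurable W)
    (hW'meas : Measurable W')
    (hJsymm : Measure.map J ℙ = Measure.map (fun ω => -J ω) ℙ)
    (hJint : Integrable J ℙ)
    (hW : ∀ ω, W ω ∈ Set.Icc (-1 : ℝ) 1) (hW' : ∀ ω, W' ω ∈ Set.Icc (-1 : ℝ) 1)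
    (hWid : IdentDistrib W W' ℙ ℙ) (hWindep : IndepFun W W' ℙ)
    (hindep : IndepFun (fun ω => (W ω, W' ω)) J ℙ) :
    Integrable (fun ω => Real.log (Real.cosh (β * J ω))) ℙ ∧
    Integrable (fun ω =>
      Real.log (Real.cosh (β * ((1 / β) * artanh (Real.tanh (β * J ω) * W ω))))) ℙ ∧
    Integrable (fun ω =>
      Real.log (Real.cosh (β * ((1 / β) * artanh (Real.tanh (β * J ω) * W ω * W' ω))))) ℙ ∧
    Summable (fun n : ℕ => (1 / (2 * (n + 1) : ℝ)) *
      (∫ ω, Real.tanh (β * J ω) ^ (2 * (n + 1)) ∂ℙ) *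
      (1 - ∫ ω, (W ω) ^ (2 * (n + 1)) ∂ℙ) ^ 2) ∧
    (∫ ω, Real.log (Real.cosh (β * J ω)) ∂ℙ)
        - 2 * ∫ ω, Real.log (Real.cosh (β * ((1 / β) * artanh (Real.tanh (β * J ω) * W ω)))) ∂ℙ
        + ∫ ω, Real.log (Real.cosh (β * ((1 / β) * artanh (Real.tanh (β * J ω) * W ω * W' ω)))) ∂ℙ
      = ∑' n : ℕ, (1 / (2 * (n + 1) : ℝ)) *
          (∫ ω, Real.tanh (β * J ω) ^ (2 * (n + 1)) ∂ℙ) *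
          (1 - ∫ ω, (W ω) ^ (2 * (n + 1)) ∂ℙ) ^ 2 :=
  rs_trial_function_eq_general β hβ Ω J W W' hJint hW hW' hWid hWindep hindep
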